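/- Let μ be a singular Borel probability measure on [0,1) with Normalized Cauchy Transform V_μ(f) = C_μ(f)/C_μ(1). Then for every f ∈ L²(μ) and w in the open unit disk, ([V_μ(f)](w) − [V_μ(f)](0))/w = [V_μ(e^{−2πix}(f − ⟨f, 1⟩_{L²(μ)}))](w). -/

import Mathlib

open MeasureTheory

/-- The Normalized Cauchy Transform `V_μ(f) = C_μ(f)/C_μ(1)`. -/
noncomputable def NCT (μ : Measure ℝ) (f : ℝ → ℂ) (w : ℂ) : ℂ :=
  (∫ x, f x / (1 - w * Complex.exp (-(2 * Real.pi * Complex.I * x))) ∂μ)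
    / (∫ x, 1 / (1 - w * Complex.exp (-(2 * Real.pi * Complex.I * x))) ∂μ)

open Complex Real

/-! With `e(x) = e^{-2πix}`, the kernel satisfies `(1 - w e)⁻¹ = 1 + w e (1 - w e)⁻¹`, so for `h`
of mean zero `C_μ(h)(w) = w C_μ(e h)(w)`. Taking `h = f - ⟨f, 1⟩` gives
`C_μ(f)(w) - ⟨f, 1⟩ C_μ(1)(w) = w C_μ(e (f - ⟨f, 1⟩))(w)`, and it remains to divide by
`w C_μ(1)(w)`. This is nonzero because `z ↦ (1 - z)⁻¹` maps the unit disk into the half-plane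
`re > 1/2`. -/

lemma norm_cexp_neg_two_pi_I_mul (x : ℝ) : ‖cexp (-(2 * π * I * x))‖ = 1 := by
  rw [show -(2 * π * I * x) = ((-(2 * π * x) : ℝ) : ℂ) * I by push_cast; ring]
  exact norm_exp_ofReal_mul_I _

lemma norm_inv_one_sub_le {z : ℂ} (hz : ‖z‖ < 1) : ‖(1 - z)⁻¹‖ ≤ (1 - ‖z‖)⁻¹ := by
  have hle : 1 - ‖z‖ ≤ ‖1 - z‖ := by simpa using norm_sub_norm_le (1 : ℂ) z
  rw [norm_inv]
  exact inv_anti₀ (by linarith) hle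

lemma half_lt_re_inv_one_sub {z : ℂ} (hz : ‖z‖ < 1) : 1 / 2 < ((1 - z)⁻¹).re := by
  have hz2 : z.re * z.re + z.im * z.im < 1 := by
    rw [← normSq_apply, normSq_eq_norm_sq]; nlinarith [norm_nonneg z]
  have hre : 0 < 1 - z.re := by nlinarith [sq_nonneg z.im]
  rw [inv_re, normSq_apply]
  simp only [sub_re, one_re, sub_im, one_im]
  rw [lt_div_iff₀ (by nlinarith [sq_nonneg z.im])]
  nlinarith

noncomputable def cauchyTransform (μ : Measure ℝ) (f : ℝ → ℂ) (w : ℂ) : ℂ :=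
  ∫ x, f x / (1 - w * cexp (-(2 * π * I * x))) ∂μ

lemma NCT_eq_div (μ : Measure ℝ) (f : ℝ → ℂ) (w : ℂ) :
    NCT μ f w = cauchyTransform μ f w / cauchyTransform μ 1 w := rfl

section CauchyTransform

variable {μ : Measure ℝ} {w : ℂ}

lemma norm_mul_cexp_lt_one (hw : ‖w‖ < 1) (x : ℝ) : ‖w * cexp (-(2 * π * I * x))‖ < 1 := by
  rwa [norm_mul, norm_cexp_neg_two_pi_I_mul, mul_one]

lemma norm_inv_one_sub_mul_cexp_le (hw : ‖w‖ < 1) (x : ℝ) :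
    ‖(1 - w * cexp (-(2 * π * I * x)))⁻¹‖ ≤ (1 - ‖w‖)⁻¹ := by
  simpa [norm_cexp_neg_two_pi_I_mul] using norm_inv_one_sub_le (norm_mul_cexp_lt_one hw x)

lemma integrable_div_one_sub_mul_cexp {f : ℝ → ℂ} (hf : Integrable f μ) (hw : ‖w‖ < 1) :
    Integrable (fun x => f x / (1 - w * cexp (-(2 * π * I * x)))) μ := by
  simp_rw [div_eq_mul_inv]
  exact hf.mul_bdd (by fun_prop) (.of_forall (norm_inv_one_sub_mul_cexp_le hw))

lemma cauchyTransform_sub_const [IsFiniteMeasure μ] {f : ℝ → ℂ} (hf : Integrable f μ)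
    (hw : ‖w‖ < 1) (c : ℂ) :
    cauchyTransform μ (fun x => f x - c) w = cauchyTransform μ f w - c * cauchyTransform μ 1 w := by
  simp only [cauchyTransform, Pi.one_apply]
  rw [← integral_const_mul, ← integral_sub (integrable_div_one_sub_mul_cexp hf hw)
    ((integrable_div_one_sub_mul_cexp (integrable_const 1) hw).const_mul c)]
  congr 1 with x
  ring

lemma cauchyTransform_eq_mul_of_integral_eq_zero {h : ℝ → ℂ} (hh : Integrable h μ)
    (h0 : ∫ x, h x ∂μ = 0) (hw : ‖w‖ < 1) :
    cauchyTransform μ h w = w * cauchyTransform μ (fun x => cexp (-(2 * π * I * x)) * h x) w := by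
  have heh : Integrable (fun x : ℝ => cexp (-(2 * π * I * x)) * h x) μ :=
    hh.bdd_mul (c := 1) (by fun_prop) (.of_forall fun x => (norm_cexp_neg_two_pi_I_mul x).le)
  have hkernel : ∀ x : ℝ, h x / (1 - w * cexp (-(2 * π * I * x))) =
      h x + w * (cexp (-(2 * π * I * x)) * h x / (1 - w * cexp (-(2 * π * I * x)))) := by
    intro x
    have hne : 1 - w * cexp (-(2 * π * I * x)) ≠ 0 :=
      sub_ne_zero.mpr (ne_of_apply_ne norm (by simpa using (norm_mul_cexp_lt_one hw x).ne'))
    field_simp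
    ring
  rw [cauchyTransform, cauchyTransform, ← integral_const_mul, integral_congr_ae (.of_forall hkernel),
    integral_add hh ((integrable_div_one_sub_mul_cexp heh hw).const_mul w), h0, zero_add]

lemma cauchyTransform_one_ne_zero [IsFiniteMeasure μ] [NeZero μ] (hw : ‖w‖ < 1) :
    cauchyTransform μ 1 w ≠ 0 := by
  have hint := integrable_div_one_sub_mul_cexp (μ := μ) (integrable_const (1 : ℂ)) hw
  have hre : ∫ _x, (1 / 2 : ℝ) ∂μ ≤ (cauchyTransform μ 1 w).re := by
    rw [cauchyTransform]
    simp only [Pi.one_apply]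
    rw [← RCLike.re_to_complex, ← integral_re hint]
    refine integral_mono (integrable_const _) hint.re fun x => ?_
    simpa using (half_lt_re_inv_one_sub (norm_mul_cexp_lt_one hw x)).le
  intro h0
  rw [h0, integral_const, smul_eq_mul, zero_re] at hre
  nlinarith [measureReal_univ_pos (μ := μ)]

lemma NCT_zero [IsProbabilityMeasure μ] (f : ℝ → ℂ) : NCT μ f 0 = ∫ x, f x ∂μ := by
  simp [NCT]

end CauchyTransform

theorem stmt9_general (μ : Measure ℝ) [IsProbabilityMeasure μ]
    (f : ℝ → ℂ) (hf : MemLp f 2 μ) :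
    ∀ w ∈ Metric.ball (0 : ℂ) 1, w ≠ 0 →
      (NCT μ f w - NCT μ f 0) / w
        = NCT μ (fun x => Complex.exp (-(2 * Real.pi * Complex.I * x))
            * (f x - ∫ y, f y ∂μ)) w := by
  intro w hw hw0
  have hw1 : ‖w‖ < 1 := mem_ball_zero_iff.mp hw
  have hf1 : Integrable f μ := hf.integrable one_le_two
  have hmean : ∫ x, (f x - ∫ y, f y ∂μ) ∂μ = 0 := by
    simp [integral_sub hf1 (integrable_const _)]
  have key := cauchyTransform_eq_mul_of_integral_eq_zero
    (h := fun x => f x - ∫ y, f y ∂μ) (hf1.sub (integrable_const _)) hmean hw1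
  rw [cauchyTransform_sub_const hf1 hw1] at key
  rw [NCT_zero, NCT_eq_div, NCT_eq_div]
  field_simp [cauchyTransform_one_ne_zero (μ := μ) hw1]
  linear_combination key

/-- For a singular Borel probability measure `μ` on `[0,1)` and
`f ∈ L²(μ)`, `([V_μ f](w) - [V_μ f](0))/w = [V_μ(e^{-2πix}(f - ⟨f,1⟩))](w)` on the
open unit disk. -/
theorem stmt9 (μ : Measure ℝ) [IsProbabilityMeasure μ]
    (hsing : μ ⟂ₘ (volume : Measure ℝ))
    (hsupp : μ (Set.Ico (0 : ℝ) 1)ᶜ = 0)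
    (f : ℝ → ℂ) (hf : MemLp f 2 μ) :
    ∀ w ∈ Metric.ball (0 : ℂ) 1, w ≠ 0 →
      (NCT μ f w - NCT μ f 0) / w
        = NCT μ (fun x => Complex.exp (-(2 * Real.pi * Complex.I * x))
            * (f x - ∫ y, f y ∂μ)) w :=
  stmt9_general μ f hf
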